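/- arXiv:2503.17088 — 3 statements merged into one kernel-verified Lean document; each statement's English description precedes it below -/
import Mathlib

section
/- For all real t with |t| < 1/4, exp(−t)/√(1−2t) ≤ exp(2t²). -/
/-!
Squaring, the claim says `exp (-(x + x²)) ≤ 1 - x` for `x = 2t`. Multiplying out, it suffices that
`(1 - x) * exp (x + x²) ≥ 1`: for `x ≤ 0` the bound `exp y ≥ 1 + y` already gives
`(1 - x)(1 + x + x²) = 1 - x³ ≥ 1`, and for `0 ≤ x ≤ 1/2` the second-order bound
`exp y ≥ 1 + y + y²/2` pays for the missing `x³`.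
-/

open Real

lemma one_le_one_sub_mul_exp_add_sq {x : ℝ} (hx : x ≤ 1 / 2) :
    1 ≤ (1 - x) * exp (x + x ^ 2) := by
  have hx' : 0 ≤ 1 - x := by linarith
  rcases le_total x 0 with hneg | hnonneg
  · calc 1 ≤ (1 - x) * (x + x ^ 2 + 1) := by nlinarith [pow_two_nonneg x]
      _ ≤ (1 - x) * exp (x + x ^ 2) := by gcongr; exact add_one_le_exp _
  · have hy : 0 ≤ x + x ^ 2 := by positivity
    calc 1 ≤ (1 - x) * (1 + (x + x ^ 2) + (x + x ^ 2) ^ 2 / 2) := by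
          nlinarith [mul_nonneg (mul_nonneg hnonneg hnonneg) hnonneg,
            mul_nonneg (pow_nonneg hnonneg 4) hnonneg, pow_nonneg hnonneg 4]
      _ ≤ (1 - x) * exp (x + x ^ 2) := by gcongr; exact quadratic_le_exp_of_nonneg hy

lemma exp_neg_add_sq_le_one_sub {x : ℝ} (hx : x ≤ 1 / 2) : exp (-(x + x ^ 2)) ≤ 1 - x := by
  rw [exp_neg, inv_le_iff_one_le_mul₀ (exp_pos _)]
  exact one_le_one_sub_mul_exp_add_sq hx

lemma exp_neg_sub_two_mul_sq_le_sqrt {t : ℝ} (ht : t ≤ 1 / 4) :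
    exp (-t - 2 * t ^ 2) ≤ √(1 - 2 * t) := by
  calc exp (-t - 2 * t ^ 2) = √(exp (-(2 * t + (2 * t) ^ 2))) := by
        rw [← sqrt_sq (exp_pos _).le, ← exp_nat_mul]; ring_nf
    _ ≤ √(1 - 2 * t) := sqrt_le_sqrt (exp_neg_add_sq_le_one_sub (by linarith))

/-- For all real `t` with `|t| < 1/4`, `exp(-t)/√(1-2t) ≤ exp(2t²)`. -/
theorem stmt_1 (t : ℝ) (ht : |t| < 1/4) :
    Real.exp (-t) / Real.sqrt (1 - 2*t) ≤ Real.exp (2 * t^2) := by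
  have ht' : t ≤ 1 / 4 := (le_abs_self t).trans ht.le
  have hsqrt : 0 < √(1 - 2 * t) := sqrt_pos.mpr (by linarith)
  rw [div_le_iff₀ hsqrt]
  calc exp (-t) = exp (2 * t ^ 2) * exp (-t - 2 * t ^ 2) := by rw [← exp_add]; ring_nf
    _ ≤ exp (2 * t ^ 2) * √(1 - 2 * t) := by gcongr; exact exp_neg_sub_two_mul_sq_le_sqrt ht'
end

section
/- Let x₁,…,x_n be i.i.d. chi-squared random variables with 2L degrees of freedom and let λ₁,…,λ_n be nonnegative reals with λ_max = max_i λ_i. Then for every δ > 0, P[ Σ_{i=1}^n ( (λ_i/2) x_i − L λ_i ) ≥ nLδ ] ≤ exp( − min{ (nLδ)²/(4L Σ_i λ_i²), nLδ/(4 λ_max) } ). -/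
/-!
The centred half chi-square variable `x / 2 - L`, with `x ~ χ²(2L)`, has moment generating
function `(exp (-v) / (1 - v)) ^ L`, which is at most `exp (L v²)` for `0 ≤ v ≤ 1/2`: it is
sub-exponential. Multiplying the independent factors, the weighted sum `S = Σ λᵢ (xᵢ / 2 - L)`
satisfies `E[exp (t S)] ≤ exp (t² L Σ λᵢ²)` as long as `t λ_max ≤ 1/2`, and Chernoff's bound
`P[S ≥ a] ≤ exp (-t a + t² L Σ λᵢ²)` optimised over this range of `t` gives the minimum of the
Gaussian exponent `a² / (4 L Σ λᵢ²)` and the exponential one `a / (4 λ_max)`.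
-/

open MeasureTheory ProbabilityTheory

/-- The chi-squared distribution with `k` degrees of freedom, as the Gamma distribution with
shape `k/2` and rate `1/2`. -/
noncomputable def chiSqMeasure (k : ℕ) : Measure ℝ :=
  gammaMeasure ((k : ℝ) / 2) (1 / 2)

open Real

theorem exp_neg_div_one_sub_le_exp_sq {v : ℝ} (h0 : 0 ≤ v) (h1 : v ≤ 1 / 2) :
    exp (-v) / (1 - v) ≤ exp (v ^ 2) := by
  have key : 1 ≤ exp (v ^ 2) * exp v * (1 - v) :=
    calc (1 : ℝ) ≤ (v ^ 2 + 1) * (1 + v + v ^ 2 / 2) * (1 - v) := by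
          nlinarith [pow_nonneg h0 3]
      _ ≤ exp (v ^ 2) * exp v * (1 - v) := by
          gcongr
          · linarith
          · exact add_one_le_exp _
          · exact quadratic_le_exp_of_nonneg h0
  rw [div_le_iff₀ (by linarith), exp_neg, inv_le_iff_one_le_mul₀' (exp_pos v)]
  linarith

theorem exists_neg_mul_add_sq_mul_le_neg_min {a s m : ℝ} (ha : 0 ≤ a) (hm : 0 ≤ m) :
    ∃ t, 0 ≤ t ∧ t * m ≤ 1 / 2 ∧
      -t * a + t ^ 2 * s ≤ -min (a ^ 2 / (4 * s)) (a / (4 * m)) := by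
  rcases hm.eq_or_lt with rfl | hm
  · -- `a / (4 * 0) = 0`, so the minimum is `≤ 0` and `t = 0` works.
    exact ⟨0, le_rfl, by norm_num, by simp⟩
  rcases le_or_gt s (a * m) with hsam | hsam
  · refine ⟨1 / (2 * m), by positivity, le_of_eq (by field_simp), ?_⟩
    have : -(1 / (2 * m)) * a + (1 / (2 * m)) ^ 2 * s ≤ -(a / (4 * m)) := by
      field_simp
      nlinarith
    exact this.trans (neg_le_neg (min_le_right _ _))
  · have hs : 0 < s := by nlinarith
    refine ⟨a / (2 * s), by positivity, ?_, ?_⟩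
    · rw [div_mul_eq_mul_div, div_le_iff₀ (by positivity)]
      linarith
    · refine le_of_eq_of_le ?_ (neg_le_neg (min_le_left _ _))
      field_simp
      ring

theorem integral_gammaMeasure {a r : ℝ} (ha : 0 < a) (hr : 0 < r) (f : ℝ → ℝ) :
    ∫ x, f x ∂gammaMeasure a r = ∫ x, gammaPDFReal a r x * f x := by
  rw [gammaMeasure, integral_withDensity_eq_integral_toReal_smul (f := gammaPDF a r)
    (measurable_gammaPDFReal a r).ennreal_ofReal (ae_of_all _ fun _ => ENNReal.ofReal_lt_top)]
  simp only [gammaPDF, ENNReal.toReal_ofReal (gammaPDFReal_nonneg ha hr _), smul_eq_mul]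

theorem gammaPDFReal_mul_exp_mul {a r s : ℝ} (hr : 0 < r) (hs : s < r) (x : ℝ) :
    gammaPDFReal a r x * exp (s * x) = (r / (r - s)) ^ a * gammaPDFReal a (r - s) x := by
  unfold gammaPDFReal
  split_ifs
  · rw [div_rpow hr.le (by linarith)]
    have : (r - s) ^ a ≠ 0 := (rpow_pos_of_pos (by linarith) _).ne'
    field_simp
    rw [mul_assoc, ← exp_add]
    ring_nf
  · simp

theorem mgf_id_gammaMeasure {a r s : ℝ} (ha : 0 < a) (hr : 0 < r) (hs : s < r) :
    mgf id (gammaMeasure a r) s = (r / (r - s)) ^ a := by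
  have hrs : 0 < r - s := sub_pos.2 hs
  have hone : ∫ x, gammaPDFReal a (r - s) x = 1 := by
    have := isProbabilityMeasure_gammaMeasure ha hrs
    simpa using (integral_gammaMeasure ha hrs fun _ => (1 : ℝ)).symm
  simp only [mgf, id, integral_gammaMeasure ha hr, gammaPDFReal_mul_exp_mul hr hs,
    integral_const_mul, hone, mul_one]

section

variable {Ω : Type*} [MeasurableSpace Ω] {μ : Measure Ω}

theorem mgf_of_map_eq_chiSqMeasure {X : Ω → ℝ} {k : ℕ} (hk : 0 < k) (hX : AEMeasurable X μ)
    (hd : μ.map X = chiSqMeasure k) {s : ℝ} (hs : s < 1 / 2) :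
    mgf X μ s = (1 - 2 * s) ^ (-(k / 2 : ℝ)) := by
  rw [← mgf_id_map hX, hd, chiSqMeasure, mgf_id_gammaMeasure (by positivity) one_half_pos hs,
    rpow_neg (by linarith), ← inv_rpow (by linarith)]
  congr 1
  field_simp

theorem mgf_half_sub_of_map_eq_chiSqMeasure {X : Ω → ℝ} {L : ℕ} (hL : 0 < L)
    (hX : AEMeasurable X μ) (hd : μ.map X = chiSqMeasure (2 * L)) {v : ℝ} (hv : v < 1) :
    mgf (fun ω => X ω / 2 - L) μ v = (exp (-v) / (1 - v)) ^ L := by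
  have haff : (fun ω => X ω / 2 - L) = fun ω => 2⁻¹ * X ω + -L := by
    ext
    ring
  rw [haff, mgf_add_const, mgf_const_mul,
    mgf_of_map_eq_chiSqMeasure (by positivity) hX hd (by linarith)]
  push_cast
  rw [show (2 : ℝ) * L / 2 = L by ring, show 1 - 2 * (2⁻¹ * v) = 1 - v by ring,
    rpow_neg (by linarith), rpow_natCast, div_pow, ← exp_nat_mul]
  ring_nf

theorem mgf_half_sub_pos_of_map_eq_chiSqMeasure {X : Ω → ℝ} {L : ℕ} (hL : 0 < L)
    (hX : AEMeasurable X μ) (hd : μ.map X = chiSqMeasure (2 * L)) {v : ℝ} (hv : v < 1) :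
    0 < mgf (fun ω => X ω / 2 - L) μ v := by
  rw [mgf_half_sub_of_map_eq_chiSqMeasure hL hX hd hv]
  exact pow_pos (div_pos (exp_pos _) (by linarith)) L

theorem mgf_half_sub_le_of_map_eq_chiSqMeasure {X : Ω → ℝ} {L : ℕ} (hL : 0 < L)
    (hX : AEMeasurable X μ) (hd : μ.map X = chiSqMeasure (2 * L)) {v : ℝ} (h0 : 0 ≤ v)
    (h1 : v ≤ 1 / 2) :
    mgf (fun ω => X ω / 2 - L) μ v ≤ exp (L * v ^ 2) := by
  rw [mgf_half_sub_of_map_eq_chiSqMeasure hL hX hd (by linarith), exp_nat_mul]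
  exact pow_le_pow_left₀ (div_pos (exp_pos _) (by linarith)).le
    (exp_neg_div_one_sub_le_exp_sq h0 h1) L

theorem measureReal_sum_ge_le_of_mgf_le [IsFiniteMeasure μ] {ι : Type*} [Fintype ι]
    {Y : ι → Ω → ℝ} (hmeas : ∀ i, Measurable (Y i)) (hindep : iIndepFun Y μ) {t : ℝ}
    (ht : 0 ≤ t) {g : ι → ℝ} (hpos : ∀ i, 0 < mgf (Y i) μ t)
    (hle : ∀ i, mgf (Y i) μ t ≤ exp (g i)) (ε : ℝ) :
    μ.real {ω | ε ≤ ∑ i, Y i ω} ≤ exp (-t * ε + ∑ i, g i) := by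
  have hmgf : mgf (∑ i, Y i) μ t = ∏ i, mgf (Y i) μ t := hindep.mgf_sum hmeas _
  have hint : Integrable (fun ω => exp (t * (∑ i, Y i) ω)) μ := by
    by_contra h
    exact (Finset.prod_pos fun i _ => hpos i).ne' (hmgf ▸ mgf_undef h)
  calc μ.real {ω | ε ≤ ∑ i, Y i ω} = μ.real {ω | ε ≤ (∑ i, Y i) ω} := by
        simp only [Finset.sum_apply]
    _ ≤ exp (-t * ε) * mgf (∑ i, Y i) μ t := measure_ge_le_exp_mul_mgf ε ht hint
    _ ≤ exp (-t * ε) * ∏ i, exp (g i) := by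
        rw [hmgf]
        exact mul_le_mul_of_nonneg_left
          (Finset.prod_le_prod (fun i _ => (hpos i).le) fun i _ => hle i) (exp_pos _).le
    _ = exp (-t * ε + ∑ i, g i) := by rw [exp_add, exp_sum]

end

theorem stmt_3_general {Ω : Type*} [MeasurableSpace Ω] (μpr : Measure Ω) [IsProbabilityMeasure μpr]
    (n L : ℕ) (hL : 1 ≤ L)
    (x : Fin n → Ω → ℝ) (hmeas : ∀ i, Measurable (x i))
    (hindep : iIndepFun x μpr)
    (hdist : ∀ i, μpr.map (x i) = chiSqMeasure (2 * L))
    (lam : Fin n → ℝ) (hlam : ∀ i, 0 ≤ lam i)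
    (lmax : ℝ) (hlmax : IsGreatest (Set.range lam) lmax)
    (δ : ℝ) (hδ : 0 < δ) :
    μpr {ω | (n : ℝ) * L * δ ≤ ∑ i, (lam i / 2 * x i ω - L * lam i)} ≤
      ENNReal.ofReal (Real.exp (-(min (((n : ℝ) * L * δ)^2 / (4 * L * ∑ i, (lam i)^2))
        ((n : ℝ) * L * δ / (4 * lmax))))) := by
  obtain ⟨⟨i₀, hi₀⟩, hub⟩ := hlmax
  obtain ⟨t, ht, htm, hexponent⟩ := exists_neg_mul_add_sq_mul_le_neg_min
    (a := n * L * δ) (s := L * ∑ i, lam i ^ 2) (by positivity) (hi₀ ▸ hlam i₀)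
  have hv (i : Fin n) : 0 ≤ lam i * t ∧ lam i * t ≤ 1 / 2 :=
    ⟨mul_nonneg (hlam i) ht, by nlinarith [hub ⟨i, rfl⟩]⟩
  set Y : Fin n → Ω → ℝ := fun i ω => lam i * (x i ω / 2 - L)
  have htail := measureReal_sum_ge_le_of_mgf_le (μ := μpr) (Y := Y) (fun i => by fun_prop)
    (hindep.comp (fun i y => lam i * (y / 2 - L)) fun i => by fun_prop) ht
    (g := fun i => L * (lam i * t) ^ 2)
    (fun i => by
      rw [mgf_const_mul]
      exact mgf_half_sub_pos_of_map_eq_chiSqMeasure hL (hmeas i).aemeasurable (hdist i)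
        (by linarith [hv i]))
    (fun i => by
      rw [mgf_const_mul]
      exact mgf_half_sub_le_of_map_eq_chiSqMeasure hL (hmeas i).aemeasurable (hdist i)
        (hv i).1 (hv i).2)
    (n * L * δ)
  have hsum (ω : Ω) : ∑ i, (lam i / 2 * x i ω - L * lam i) = ∑ i, Y i ω :=
    Finset.sum_congr rfl fun i _ => by ring
  simp_rw [hsum]
  rw [← ofReal_measureReal]
  refine ENNReal.ofReal_le_ofReal (htail.trans (exp_le_exp.2 ?_))
  calc -t * (n * L * δ) + ∑ i, L * (lam i * t) ^ 2
      = -t * (n * L * δ) + t ^ 2 * (L * ∑ i, lam i ^ 2) := by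
        rw [Finset.mul_sum, Finset.mul_sum]; congr 1; exact Finset.sum_congr rfl fun i _ => by ring
    _ ≤ _ := hexponent
    _ = _ := by rw [← mul_assoc (4 : ℝ)]

/-- Chernoff bound: if `x₁, …, x_n` are i.i.d. `χ²(2L)` random variables and `λ_i ≥ 0` with
maximum `λ_max`, then for every `δ > 0`,
`P[Σ_i ((λ_i/2) x_i - L λ_i) ≥ nLδ] ≤ exp(-min{(nLδ)²/(4L Σ_i λ_i²), nLδ/(4λ_max)})`. -/
theorem stmt_3 {Ω : Type*} [MeasurableSpace Ω] (μpr : Measure Ω) [IsProbabilityMeasure μpr]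
    (n L : ℕ) (hn : 1 ≤ n) (hL : 1 ≤ L)
    (x : Fin n → Ω → ℝ) (hmeas : ∀ i, Measurable (x i))
    (hindep : iIndepFun x μpr)
    (hdist : ∀ i, μpr.map (x i) = chiSqMeasure (2 * L))
    (lam : Fin n → ℝ) (hlam : ∀ i, 0 ≤ lam i)
    (lmax : ℝ) (hlmax : IsGreatest (Set.range lam) lmax)
    (δ : ℝ) (hδ : 0 < δ) :
    μpr {ω | (n : ℝ) * L * δ ≤ ∑ i, (lam i / 2 * x i ω - L * lam i)} ≤
      ENNReal.ofReal (Real.exp (-(min (((n : ℝ) * L * δ)^2 / (4 * L * ∑ i, (lam i)^2))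
        ((n : ℝ) * L * δ / (4 * lmax))))) :=
  stmt_3_general μpr n L hL x hmeas hindep hdist lam hlam lmax hlmax δ hδ
end

section
/- For every integer L ≥ 1 and ε ∈ (0,1), the ε-quantile r of the chi-squared distribution with 2L degrees of freedom, i.e. the solution of P[χ²(2L) ≤ r] = ε, satisfies r ≤ 2L + 2 ln(1/(1−ε)) + 2√(2L ln(1/(1−ε))). -/
open MeasureTheory ProbabilityTheory

/-!
χ²(2L) is the Gamma law of shape `L` and rate `1/2`. Tilting its density to the rate `c = L / B`
gives the Chernoff bound `P[X > B] ≤ (B / 2L)^L e^{L - B/2}`. Writing `log (1/(1-ε)) = 2L s²`, the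
right-hand side of the claim is `B = 2L (1 + 2s + 2s²)`, and `1 + 2s + 2s² ≤ e^{2s}` turns the
Chernoff bound into `P[X > B] ≤ e^{-2Ls²} = 1 - ε`. Hence `P[X ≤ B] ≥ ε = P[X ≤ r]`, and since the
law charges every interval of `(0, ∞)`, `r ≤ B`.
-/

open Set Real

lemma le_of_measure_Iic_le {μ : Measure ℝ} [IsFiniteMeasure μ] {B r : ℝ}
    (hpos : ∀ x, B < x → 0 < μ (Ioc B x)) (h : μ (Iic r) ≤ μ (Iic B)) : r ≤ B := by
  by_contra! hBr
  have hsplit : μ (Iic r) = μ (Iic B) + μ (Ioc B r) := by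
    rw [← Iic_union_Ioc_eq_Iic hBr.le, measure_union (Iic_disjoint_Ioc le_rfl) measurableSet_Ioc]
  have := ENNReal.lt_add_right (measure_ne_top μ (Iic B)) (hpos r hBr).ne'
  exact (hsplit ▸ h).not_gt this

namespace ProbabilityTheory

lemma gammaMeasure_Ioc_pos {a r B x : ℝ} (ha : 0 < a) (hr : 0 < r) (hB : 0 ≤ B) (hBx : B < x) :
    0 < gammaMeasure a r (Ioc B x) := by
  rw [gammaMeasure, withDensity_apply _ measurableSet_Ioc,
    setLIntegral_pos_iff (f := gammaPDF a r) (measurable_gammaPDFReal a r).ennreal_ofReal]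
  have hsupp : Ioc B x ⊆ Function.support (gammaPDF a r) ∩ Ioc B x := fun y hy =>
    ⟨ENNReal.ofReal_pos.mpr (gammaPDFReal_pos ha hr (hB.trans_lt hy.1)) |>.ne', hy⟩
  calc (0 : ENNReal) < volume (Ioc B x) := by
        rw [Real.volume_Ioc]; exact ENNReal.ofReal_pos.mpr (sub_pos.mpr hBx)
    _ ≤ _ := measure_mono hsupp

lemma gammaPDFReal_eq_mul_gammaPDFReal {a r c x : ℝ} (hr : 0 ≤ r) (hc : 0 < c) (hx : 0 ≤ x) :
    gammaPDFReal a r x = (r / c) ^ a * exp (-((r - c) * x)) * gammaPDFReal a c x := by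
  have hexp : exp (-(r * x)) = exp (-((r - c) * x)) * exp (-(c * x)) := by
    rw [← exp_add]; ring_nf
  simp only [gammaPDFReal, if_pos hx, div_rpow hr hc.le, hexp]
  field_simp

lemma gammaPDF_le_mul_gammaPDF {a r c B x : ℝ} (hc : 0 < c) (hcr : c ≤ r) (hB : 0 ≤ B)
    (hBx : B ≤ x) :
    gammaPDF a r x ≤ ENNReal.ofReal ((r / c) ^ a * exp (-((r - c) * B))) * gammaPDF a c x := by
  have hx : 0 ≤ x := hB.trans hBx
  have hr : 0 ≤ r := hc.le.trans hcr
  rw [gammaPDF, gammaPDF, gammaPDFReal_eq_mul_gammaPDFReal hr hc hx,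
    ENNReal.ofReal_mul (by positivity)]
  gcongr

lemma gammaMeasure_Ioi_le {a r c B : ℝ} (ha : 0 < a) (hc : 0 < c) (hcr : c ≤ r) (hB : 0 ≤ B) :
    gammaMeasure a r (Ioi B) ≤ ENNReal.ofReal ((r / c) ^ a * exp (-((r - c) * B))) := by
  have hmeas : Measurable (gammaPDF a c) := (measurable_gammaPDFReal a c).ennreal_ofReal
  rw [gammaMeasure, withDensity_apply _ measurableSet_Ioi]
  calc ∫⁻ x in Ioi B, gammaPDF a r x
      ≤ ∫⁻ x in Ioi B, ENNReal.ofReal ((r / c) ^ a * exp (-((r - c) * B))) * gammaPDF a c x :=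
        setLIntegral_mono (measurable_const.mul hmeas)
          fun x hx => gammaPDF_le_mul_gammaPDF hc hcr hB hx.le
    _ = ENNReal.ofReal ((r / c) ^ a * exp (-((r - c) * B))) * ∫⁻ x in Ioi B, gammaPDF a c x :=
        lintegral_const_mul _ hmeas
    _ ≤ ENNReal.ofReal ((r / c) ^ a * exp (-((r - c) * B))) * ∫⁻ x, gammaPDF a c x := by
        gcongr; exact Measure.restrict_le_self
    _ = _ := by rw [lintegral_gammaPDF_eq_one ha hc, mul_one]

lemma gammaMeasure_Ioi_le_chernoff {a r B : ℝ} (ha : 0 < a) (hr : 0 < r) (haB : a ≤ r * B) :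
    gammaMeasure a r (Ioi B) ≤ ENNReal.ofReal ((r * B / a) ^ a * exp (a - r * B)) := by
  have hB : 0 < B := pos_of_mul_pos_right (ha.trans_le haB) hr.le
  convert gammaMeasure_Ioi_le ha (div_pos ha hB) ((div_le_iff₀ hB).mpr haB) hB.le using 4
  · field_simp
  · field_simp; ring

lemma gammaMeasure_Ioi_le_exp {a s : ℝ} (ha : 0 < a) (hs : 0 ≤ s) :
    gammaMeasure a (1 / 2) (Ioi (2 * a * (1 + 2 * s + 2 * s ^ 2))) ≤
      ENNReal.ofReal (exp (-(2 * a * s ^ 2))) := by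
  have hquad : 1 + 2 * s + 2 * s ^ 2 ≤ exp (2 * s) := by
    calc 1 + 2 * s + 2 * s ^ 2 = 1 + 2 * s + (2 * s) ^ 2 / 2 := by ring
      _ ≤ exp (2 * s) := quadratic_le_exp_of_nonneg (by positivity)
  refine (gammaMeasure_Ioi_le_chernoff ha one_half_pos (by nlinarith)).trans
    (ENNReal.ofReal_le_ofReal ?_)
  calc (1 / 2 * (2 * a * (1 + 2 * s + 2 * s ^ 2)) / a) ^ a *
        exp (a - 1 / 2 * (2 * a * (1 + 2 * s + 2 * s ^ 2)))
      = (1 + 2 * s + 2 * s ^ 2) ^ a * exp (-(2 * a * s) - 2 * a * s ^ 2) := by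
        congr 2 <;> [field_simp; ring]
    _ ≤ exp (2 * s) ^ a * exp (-(2 * a * s) - 2 * a * s ^ 2) := by gcongr
    _ = exp (-(2 * a * s ^ 2)) := by rw [← exp_mul, ← exp_add]; ring_nf

end ProbabilityTheory

/-- Laurent–Massart style quantile bound: for `L ≥ 1` and `ε ∈ (0,1)`, the `ε`-quantile `r` of
`χ²(2L)`, i.e. the solution of `P[χ²(2L) ≤ r] = ε`, satisfies
`r ≤ 2L + 2 ln(1/(1-ε)) + 2√(2L ln(1/(1-ε)))`. -/
theorem stmt_13 (L : ℕ) (hL : 1 ≤ L) (ε : ℝ) (hε : ε ∈ Set.Ioo (0:ℝ) 1) (r : ℝ)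
    (hr : chiSqMeasure (2 * L) (Set.Iic r) = ENNReal.ofReal ε) :
    r ≤ 2 * L + 2 * Real.log (1 / (1 - ε)) +
        2 * Real.sqrt (2 * L * Real.log (1 / (1 - ε))) := by
  obtain ⟨hε0, hε1⟩ := hε
  have hL0 : (0 : ℝ) < L := by exact_mod_cast hL
  set t := log (1 / (1 - ε)) with ht
  have ht0 : 0 ≤ t := log_nonneg (by rw [le_div_iff₀ (by linarith)]; linarith)
  set s := √(t / (2 * L))
  have hts : t = 2 * L * s ^ 2 := by rw [sq_sqrt (by positivity)]; field_simp
  have hB : 2 * L * (1 + 2 * s + 2 * s ^ 2) = 2 * L + 2 * t + 2 * √(2 * L * t) := by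
    rw [hts, show 2 * L * (2 * L * s ^ 2) = (2 * L * s) ^ 2 by ring, sqrt_sq (by positivity)]
    ring
  have hexp : exp (-(2 * L * s ^ 2)) = 1 - ε := by
    rw [← hts, ht, one_div, log_inv, neg_neg, exp_log (by linarith)]
  have hμ : chiSqMeasure (2 * L) = gammaMeasure L (1 / 2) := by simp [chiSqMeasure]
  have := isProbabilityMeasure_gammaMeasure hL0 one_half_pos
  rw [hμ] at hr
  rw [← hB]
  refine le_of_measure_Iic_le
    (fun x hx => gammaMeasure_Ioc_pos hL0 one_half_pos (by positivity) hx) ?_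
  have htail := gammaMeasure_Ioi_le_exp hL0 (sqrt_nonneg (t / (2 * L)))
  rw [hexp, ← compl_Iic, prob_compl_eq_one_sub measurableSet_Iic,
    ENNReal.ofReal_sub _ hε0.le, ENNReal.ofReal_one] at htail
  rw [hr]
  exact (ENNReal.sub_le_sub_iff_left (ENNReal.ofReal_le_one.mpr hε1.le) ENNReal.one_ne_top).mp
    htail
end
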